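/- arXiv:2511.22086 — 8 statements merged into one kernel-verified Lean document; each statement's English description precedes it below -/
import Mathlib

section
/- Let a, t, l be positive integers with a odd. If at least one of t/gcd(t,l) and l/gcd(t,l) is even, then gcd(a^t + 1, a^l + 1) = 2; if both t/gcd(t,l) and l/gcd(t,l) are odd, then gcd(a^t + 1, a^l + 1) = a^gcd(t,l) + 1. -/
/-!
With `d = gcd t l`, the gcd `g` of `a ^ t + 1` and `a ^ l + 1` divides
`gcd (a ^ (2 * t) - 1) (a ^ (2 * l) - 1) = a ^ (2 * d) - 1`.
If `t / d` is even, then `a ^ (2 * d) - 1 ∣ a ^ t - 1`, so `g ∣ 2`.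
If `t / d` and `l / d` are odd, put `b = a ^ d`: then `b + 1` divides both numbers, and
`b ^ (t / d) ≡ b [MOD b ^ 2 - 1]` gives `g ∣ gcd (b + 1) (b ^ 2 - 1) = b + 1`.
-/

namespace Nat

theorem pow_add_one_dvd_pow_two_mul_sub_one (x n : ℕ) : x ^ n + 1 ∣ x ^ (2 * n) - 1 := by
  rw [mul_comm, pow_mul, ← one_pow 2, Nat.sq_sub_sq, one_pow]
  exact dvd_mul_right _ _

theorem gcd_pow_add_one_dvd_pow_sub_one (x m n : ℕ) :
    gcd (x ^ m + 1) (x ^ n + 1) ∣ x ^ (2 * gcd m n) - 1 := by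
  rw [← gcd_mul_left, ← pow_sub_one_gcd_pow_sub_one]
  exact gcd_dvd_gcd (pow_add_one_dvd_pow_two_mul_sub_one x m)
    (pow_add_one_dvd_pow_two_mul_sub_one x n)

theorem pow_modEq_self_of_odd (x : ℕ) {u : ℕ} (hu : Odd u) : x ^ u ≡ x [MOD x ^ 2 - 1] := by
  obtain ⟨k, rfl⟩ := hu
  refine (Nat.modEq_iff_dvd' (Nat.le_self_pow (by omega) x)).2 ?_ |>.symm
  rw [pow_succ x (2 * k), ← Nat.sub_one_mul, pow_mul]
  exact (sub_one_dvd_pow_sub_one _ _).mul_right _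

theorem gcd_pow_add_one_eq_two {x m : ℕ} (hx : Odd x) (n : ℕ) (hm : Even (m / gcd m n)) :
    gcd (x ^ m + 1) (x ^ n + 1) = 2 := by
  have hdm : 2 * gcd m n ∣ m := by
    rw [mul_comm]; exact mul_dvd_of_dvd_div (gcd_dvd_left m n) hm.two_dvd
  have hsub : gcd (x ^ m + 1) (x ^ n + 1) ∣ x ^ m - 1 :=
    (gcd_pow_add_one_dvd_pow_sub_one x m n).trans (pow_sub_one_dvd_pow_sub_one x hdm)
  have hpos : 0 < x ^ m := pow_pos hx.pos m
  refine dvd_antisymm ?_ (dvd_gcd (hx.pow.add_one).two_dvd (hx.pow.add_one).two_dvd)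
  have := Nat.dvd_sub (gcd_dvd_left _ _) hsub
  rwa [show x ^ m + 1 - (x ^ m - 1) = 2 by omega] at this

theorem gcd_pow_add_one_eq_pow_gcd_add_one (x : ℕ) {m n : ℕ} (hm : Odd (m / gcd m n))
    (hn : Odd (n / gcd m n)) : gcd (x ^ m + 1) (x ^ n + 1) = x ^ gcd m n + 1 := by
  set d := gcd m n
  have hpow {k : ℕ} (hk : d ∣ k) (hodd : Odd (k / d)) : x ^ d + 1 ∣ x ^ k + 1 := by
    simpa [← pow_mul, Nat.mul_div_cancel' hk] using hodd.nat_add_dvd_pow_add_pow (x ^ d) 1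
  refine dvd_antisymm ?_ (dvd_gcd (hpow (gcd_dvd_left m n) hm) (hpow (gcd_dvd_right m n) hn))
  have hsq : gcd (x ^ m + 1) (x ^ n + 1) ∣ (x ^ d) ^ 2 - 1 := by
    rw [← pow_mul, mul_comm]; exact gcd_pow_add_one_dvd_pow_sub_one x m n
  have hm' : x ^ m + 1 = (x ^ d) ^ (m / d) + 1 := by
    rw [← pow_mul, Nat.mul_div_cancel' (gcd_dvd_left m n)]
  calc gcd (x ^ m + 1) (x ^ n + 1) ∣ gcd (x ^ m + 1) ((x ^ d) ^ 2 - 1) :=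
        dvd_gcd (gcd_dvd_left _ _) hsq
    _ = gcd (x ^ d + 1) ((x ^ d) ^ 2 - 1) := by
        rw [hm']; exact ((pow_modEq_self_of_odd _ hm).add_right 1).gcd_eq
    _ ∣ x ^ d + 1 := gcd_dvd_left _ _

end Nat

theorem stmt_1_general (a t l : ℕ) (hodd : Odd a) :
    ((Even (t / Nat.gcd t l) ∨ Even (l / Nat.gcd t l)) →
      Nat.gcd (a ^ t + 1) (a ^ l + 1) = 2) ∧
    ((Odd (t / Nat.gcd t l) ∧ Odd (l / Nat.gcd t l)) →
      Nat.gcd (a ^ t + 1) (a ^ l + 1) = a ^ Nat.gcd t l + 1) := by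
  refine ⟨?_, fun ⟨ht, hl⟩ => Nat.gcd_pow_add_one_eq_pow_gcd_add_one a ht hl⟩
  rintro (ht | hl)
  · exact Nat.gcd_pow_add_one_eq_two hodd l ht
  · rw [Nat.gcd_comm t l] at hl
    rw [Nat.gcd_comm]
    exact Nat.gcd_pow_add_one_eq_two hodd t hl

theorem stmt_1 (a t l : ℕ) (ha : 0 < a) (ht : 0 < t) (hl : 0 < l) (hodd : Odd a) :
    ((Even (t / Nat.gcd t l) ∨ Even (l / Nat.gcd t l)) →
      Nat.gcd (a ^ t + 1) (a ^ l + 1) = 2) ∧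
    ((Odd (t / Nat.gcd t l) ∧ Odd (l / Nat.gcd t l)) →
      Nat.gcd (a ^ t + 1) (a ^ l + 1) = a ^ Nat.gcd t l + 1) :=
  stmt_1_general a t l hodd
end

section
/- Let p be a prime, m a positive integer, and 1 ≤ v ≤ p^m - 2. If gcd(v, p^m - 1) < p, then the p-cyclotomic coset of v modulo p^m - 1 has size m; that is, the smallest positive integer l with v·p^l ≡ v (mod p^m - 1) is l = m. -/
/-!
If `v * p ^ l ≡ v` modulo `N = p ^ m - 1` and `d = gcd v N`, cancelling `v` gives
`N / d ∣ p ^ l - 1`. For `0 < l < m` this forces `p ^ m - 1 ≤ d * (p ^ l - 1)`, which is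
impossible when `d ≤ p - 1`, since `(p - 1) * (p ^ l - 1) < p ^ (l + 1) - 1`.
-/

namespace Nat

theorem div_gcd_dvd_pow_sub_one_of_mul_pow_modEq {n v q l : ℕ} (hn : 0 < n) (hq : 0 < q)
    (h : v * q ^ l ≡ v [MOD n]) : n / n.gcd v ∣ q ^ l - 1 := by
  have hpow : q ^ l ≡ 1 [MOD n / n.gcd v] :=
    ModEq.cancel_left_div_gcd hn (by rwa [mul_one])
  exact (modEq_iff_dvd' (one_le_pow _ _ hq)).mp hpow.symm

theorem sub_one_mul_pow_sub_one_lt {p l m : ℕ} (hp : 1 < p) (hlm : l < m) :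
    (p - 1) * (p ^ l - 1) < p ^ m - 1 := by
  have hpl : 1 ≤ p ^ l := one_le_pow _ _ (by omega)
  have hpm : p * p ^ l ≤ p ^ m := by
    rw [← Nat.pow_succ']
    exact Nat.pow_le_pow_right (by omega) hlm
  zify [hpl, hp.le, one_le_pow m p (by omega)] at hpm ⊢
  nlinarith

theorem le_of_mul_pow_modEq_self {p m v l : ℕ} (hp : 1 < p) (hl : 0 < l)
    (hgcd : v.gcd (p ^ m - 1) < p) (h : v * p ^ l ≡ v [MOD p ^ m - 1]) : m ≤ l := by
  by_contra! hlm
  have hN : 0 < p ^ m - 1 := Nat.sub_pos_of_lt (one_lt_pow (by omega) hp)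
  have hdvd := div_gcd_dvd_pow_sub_one_of_mul_pow_modEq hN (by omega) h
  rw [gcd_comm] at hdvd
  have hle : (p ^ m - 1) / v.gcd (p ^ m - 1) ≤ p ^ l - 1 :=
    le_of_dvd (Nat.sub_pos_of_lt (one_lt_pow hl.ne' hp)) hdvd
  have hbound : p ^ m - 1 ≤ (p - 1) * (p ^ l - 1) :=
    calc p ^ m - 1 = v.gcd (p ^ m - 1) * ((p ^ m - 1) / v.gcd (p ^ m - 1)) :=
          (Nat.mul_div_cancel' (gcd_dvd_right _ _)).symm
      _ ≤ (p - 1) * (p ^ l - 1) := Nat.mul_le_mul (by omega) hle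
  exact (sub_one_mul_pow_sub_one_lt hp hlm).not_ge hbound

end Nat

theorem stmt_5_general (p m v : ℕ) (hp : p.Prime) (hm : 0 < m)
    (hgcd : Nat.gcd v (p ^ m - 1) < p) :
    IsLeast {l : ℕ | 0 < l ∧ v * p ^ l ≡ v [MOD p ^ m - 1]} m := by
  refine ⟨⟨hm, ?_⟩, fun l ⟨hl, h⟩ => Nat.le_of_mul_pow_modEq_self hp.one_lt hl hgcd h⟩
  have hpm : p ^ m ≡ 1 [MOD p ^ m - 1] := Nat.modEq_sub (Nat.one_le_pow _ _ hp.pos)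
  simpa using hpm.mul_left v

theorem stmt_5 (p m v : ℕ) (hp : p.Prime) (hm : 0 < m)
    (hv1 : 1 ≤ v) (hv2 : v ≤ p ^ m - 2)
    (hgcd : Nat.gcd v (p ^ m - 1) < p) :
    IsLeast {l : ℕ | 0 < l ∧ v * p ^ l ≡ v [MOD p ^ m - 1]} m :=
  stmt_5_general p m v hp hm hgcd
end

section
/- Let p ≥ 5 be prime, m a positive integer, and let h, k be nonnegative integers with gcd(h + k, m) = 1 and gcd(h - k, m) = 1. If v satisfies v(p^k + 1) ≡ p^h + 1 (mod p^m - 1), then gcd(p^h - v, p^m - 1) divides p - 1 and gcd(v - 1, p^m - 1) divides p - 1. -/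
/-!
Work modulo a divisor `d` of `p ^ m - 1`, where `p` is a unit with `p ^ m = 1`. If `d ∣ p ^ h - v`,
substituting `v = p ^ h` into the congruence leaves `p ^ (h + k) = 1`; if `d ∣ v - 1`, substituting
`v = 1` leaves `p ^ h = p ^ k`, so `p ^ (h - k) = 1` in the unit group. Since `h ± k` is coprime
to `m`, in both cases `p = 1` modulo `d`, that is `d ∣ p - 1`.
-/
theorem eq_one_of_pow_eq_pow_of_intGCD_sub_eq_one {M : Type*} [Monoid M] {a : M} {h k m : ℕ}
    (hm : m ≠ 0) (ham : a ^ m = 1) (hgcd : Int.gcd ((h : ℤ) - k) m = 1) (hhk : a ^ h = a ^ k) :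
    a = 1 := by
  set u := (IsUnit.of_pow_eq_one ham hm).unit
  have hu : (u : M) = a := IsUnit.unit_spec _
  have hu_sub : u ^ ((h : ℤ) - k) = 1 := by
    rw [zpow_sub, zpow_natCast, zpow_natCast, mul_inv_eq_one]
    ext; simpa [hu] using hhk
  have hu_m : u ^ (m : ℤ) = 1 := by
    ext; simpa [hu] using ham
  have := pow_intGCD_eq_one.mpr ⟨hu_sub, hu_m⟩
  rw [hgcd, pow_one] at this
  rw [← hu, this, Units.val_one]

theorem Nat.dvd_sub_one_of_natCast_eq_one {p d : ℕ} (h : (p : ZMod d) = 1) : d ∣ p - 1 := by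
  rcases p with _ | p
  · exact dvd_zero d
  · rw [Nat.add_sub_cancel, ← ZMod.natCast_eq_zero_iff]
    simpa using h

theorem ZMod.natCast_pow_eq_one_of_dvd {p d m : ℕ} (hd : (d : ℤ) ∣ (p : ℤ) ^ m - 1) :
    (p : ZMod d) ^ m = 1 := by
  rw [← sub_eq_zero]
  exact_mod_cast (ZMod.intCast_zmod_eq_zero_iff_dvd _ d).mpr hd

theorem stmt_8_general (p m : ℕ) (h k : ℕ) (v : ℤ) (hm : 0 < m)
    (hhk : Int.gcd ((h : ℤ) + k) (m : ℤ) = 1) (hhk' : Int.gcd ((h : ℤ) - k) (m : ℤ) = 1)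
    (hv : v * ((p : ℤ) ^ k + 1) ≡ (p : ℤ) ^ h + 1 [ZMOD (p : ℤ) ^ m - 1]) :
    (Int.gcd ((p : ℤ) ^ h - v) ((p : ℤ) ^ m - 1) ∣ p - 1) ∧
    (Int.gcd (v - 1) ((p : ℤ) ^ m - 1) ∣ p - 1) := by
  have hmod (a : ℤ) : let d := Int.gcd a ((p : ℤ) ^ m - 1)
      (a : ZMod d) = 0 ∧ (p : ZMod d) ^ m = 1 ∧
        (v : ZMod d) * ((p : ZMod d) ^ k + 1) = (p : ZMod d) ^ h + 1 := by
    have hd := Int.gcd_dvd_right a ((p : ℤ) ^ m - 1)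
    refine ⟨(ZMod.intCast_zmod_eq_zero_iff_dvd _ _).mpr (Int.gcd_dvd_left _ _),
      ZMod.natCast_pow_eq_one_of_dvd hd, ?_⟩
    exact_mod_cast (ZMod.intCast_eq_intCast_iff _ _ _).mpr (hv.of_dvd hd)
  constructor
  · obtain ⟨hvp, hpm, hv⟩ := hmod ((p : ℤ) ^ h - v)
    have hcop : (h + k).Coprime m := by
      rwa [Nat.Coprime, ← Int.gcd_natCast_natCast, Nat.cast_add]
    refine Nat.dvd_sub_one_of_natCast_eq_one ((pow_eq_one_iff_of_coprime hcop).mp ⟨?_, hpm⟩)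
    push_cast at hvp
    rw [pow_add]
    linear_combination hv + ((p : ZMod _) ^ k + 1) * hvp
  · obtain ⟨hv1, hpm, hv⟩ := hmod (v - 1)
    push_cast at hv1
    refine Nat.dvd_sub_one_of_natCast_eq_one
      (eq_one_of_pow_eq_pow_of_intGCD_sub_eq_one hm.ne' hpm hhk' ?_)
    linear_combination -hv + ((p : ZMod _) ^ k + 1) * hv1

theorem stmt_8 (p m : ℕ) (h k : ℕ) (v : ℤ) (hp : p.Prime) (hp5 : 5 ≤ p) (hm : 0 < m)
    (hhk : Int.gcd ((h : ℤ) + k) (m : ℤ) = 1) (hhk' : Int.gcd ((h : ℤ) - k) (m : ℤ) = 1)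
    (hv : v * ((p : ℤ) ^ k + 1) ≡ (p : ℤ) ^ h + 1 [ZMOD (p : ℤ) ^ m - 1]) :
    (Int.gcd ((p : ℤ) ^ h - v) ((p : ℤ) ^ m - 1) ∣ p - 1) ∧
    (Int.gcd (v - 1) ((p : ℤ) ^ m - 1) ∣ p - 1) :=
  stmt_8_general p m h k v hm hhk hhk' hv
end

section
/- Let p ≥ 5 be prime and m be an even positive integer with gcd(h, m) = 1 and gcd(h - k, m) = 1 for nonnegative integers h, k. Then there is no integer v satisfying v(p^k - 1) ≡ p^h - 1 (mod p^m - 1). -/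
/-!
For odd `q`, the modulus `2 (q - 1)` divides `q ^ e - 1` for every even `e`, hence divides
`q ^ m - 1` and `q ^ k - 1`, while `q ^ h ≡ q` modulo it for odd `h`. Reducing the congruence
modulo `2 (q - 1)` leaves `0 ≡ q - 1`, which is impossible as `0 < q - 1 < 2 (q - 1)`.
The coprimality conditions with even `m` force `h` odd and `h - k` odd, so `k` even.
-/

theorem Int.odd_of_gcd_eq_one_of_even {a b : ℤ} (hab : Int.gcd a b = 1) (hb : Even b) :
    Odd a := by
  by_contra ha
  have h2 : (2 : ℤ) ∣ Int.gcd a b :=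
    Int.dvd_coe_gcd (Int.not_odd_iff_even.mp ha).two_dvd hb.two_dvd
  rw [hab] at h2
  norm_num at h2

theorem Int.two_mul_sub_one_dvd_pow_sub_one {q : ℤ} (hq : Odd q) {e : ℕ} (he : Even e) :
    2 * (q - 1) ∣ q ^ e - 1 := by
  obtain ⟨s, rfl⟩ := he
  obtain ⟨t, ht⟩ := hq.add_one.two_dvd
  have hsq : 2 * (q - 1) ∣ q ^ 2 - 1 := ⟨t, by linear_combination (q - 1) * ht⟩
  simpa [← two_mul, pow_mul] using hsq.trans (sub_one_dvd_pow_sub_one (q ^ 2) s)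

theorem Int.pow_modEq_self_of_odd {q : ℤ} (hq : Odd q) {h : ℕ} (hh : Odd h) :
    q ^ h ≡ q [ZMOD 2 * (q - 1)] := by
  obtain ⟨s, rfl⟩ := hh
  have hdvd := two_mul_sub_one_dvd_pow_sub_one hq (even_two_mul s)
  refine (Int.modEq_iff_dvd.mpr ?_).symm
  rw [show q ^ (2 * s + 1) - q = q * (q ^ (2 * s) - 1) by ring]
  exact hdvd.mul_left q

theorem Int.not_exists_mul_pow_sub_one_modEq {q : ℤ} (hq : Odd q) (hq1 : 1 < q) {m k h : ℕ}
    (hm : Even m) (hk : Even k) (hh : Odd h) :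
    ¬ ∃ v : ℤ, v * (q ^ k - 1) ≡ q ^ h - 1 [ZMOD q ^ m - 1] := by
  rintro ⟨v, hv⟩
  have hmod := hv.of_dvd (two_mul_sub_one_dvd_pow_sub_one hq hm)
  have hlhs : v * (q ^ k - 1) ≡ 0 [ZMOD 2 * (q - 1)] :=
    Int.modEq_zero_iff_dvd.mpr ((two_mul_sub_one_dvd_pow_sub_one hq hk).mul_left v)
  have hrhs : q ^ h - 1 ≡ q - 1 [ZMOD 2 * (q - 1)] := (pow_modEq_self_of_odd hq hh).sub_right 1
  have hdvd : 2 * (q - 1) ∣ q - 1 :=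
    Int.modEq_zero_iff_dvd.mp (hrhs.symm.trans (hmod.symm.trans hlhs))
  have := Int.le_of_dvd (by omega) hdvd
  omega

theorem stmt_11_general (p m : ℕ) (h k : ℕ) (hp : p.Prime) (hp5 : 5 ≤ p)
    (hme : Even m) (hh : Nat.gcd h m = 1) (hhk : Int.gcd ((h : ℤ) - k) (m : ℤ) = 1) :
    ¬ ∃ v : ℤ, v * ((p : ℤ) ^ k - 1) ≡ (p : ℤ) ^ h - 1 [ZMOD (p : ℤ) ^ m - 1] := by
  have hh_odd : Odd h := (Nat.Coprime.coprime_dvd_right hme.two_dvd hh).odd_of_right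
  have hk_even : Even k := by
    have hdiff_odd := Int.odd_of_gcd_eq_one_of_even hhk (by exact_mod_cast hme)
    exact_mod_cast (Int.odd_sub.mp hdiff_odd).mp (by exact_mod_cast hh_odd)
  have hp_odd : Odd (p : ℤ) := by exact_mod_cast hp.odd_of_ne_two (by omega)
  exact Int.not_exists_mul_pow_sub_one_modEq hp_odd (by omega) hme hk_even hh_odd

theorem stmt_11 (p m : ℕ) (h k : ℕ) (hp : p.Prime) (hp5 : 5 ≤ p) (hm : 0 < m)
    (hme : Even m) (hh : Nat.gcd h m = 1) (hhk : Int.gcd ((h : ℤ) - k) (m : ℤ) = 1) :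
    ¬ ∃ v : ℤ, v * ((p : ℤ) ^ k - 1) ≡ (p : ℤ) ^ h - 1 [ZMOD (p : ℤ) ^ m - 1] :=
  stmt_11_general p m h k hp hp5 hme hh hhk
end

section
/- Let p ≥ 5 be prime, m a positive integer, k a nonnegative integer with k < m, and suppose m/gcd(k, m) ≡ 0 (mod 4). Let v = (p^m - 1)/2 + p^k + 1. Then gcd(v, p^m - 1) = p^gcd(k,m) + 1. -/
/-!
Put `P = p ^ gcd k m`. The hypothesis gives `4 * gcd k m ∣ m` and makes `k / gcd k m` odd,
so `4 (P + 1) ∣ P ^ 4 - 1 ∣ p ^ m - 1`, `P + 1 ∣ p ^ k + 1`, and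
`p ^ k + 1 ≡ P + 1 (mod 2 (P + 1))`. Conversely `gcd (p ^ k + 1) (p ^ m - 1)` divides
`p ^ (2 gcd k m) - 1 = (P - 1)(P + 1)` and shares at most a factor `2` with `P - 1`, so it
divides `2 (P + 1)`. Hence the gcd of `v = (p ^ m - 1) / 2 + (p ^ k + 1)` with `p ^ m - 1` is a
multiple of `P + 1` dividing `4 (P + 1)`, and it is not a multiple of `2 (P + 1)` because
`v ≡ P + 1 (mod 2 (P + 1))`.
-/

namespace Nat

variable {P u : ℕ}

lemma sq_modEq_one_of_odd (hP : Odd P) : P ^ 2 ≡ 1 [MOD 2 * (P + 1)] := by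
  obtain ⟨x, rfl⟩ := hP
  refine ((modEq_iff_dvd' (one_le_pow 2 (2 * x + 1) (by omega))).mpr ⟨x, ?_⟩).symm
  apply Nat.sub_eq_of_eq_add
  ring

lemma pow_modEq_self_of_odd_s12 (hP : Odd P) (hu : Odd u) : P ^ u ≡ P [MOD 2 * (P + 1)] := by
  obtain ⟨s, rfl⟩ := hu
  rw [pow_succ, pow_mul]
  simpa using ((sq_modEq_one_of_odd hP).pow s).mul_right P

lemma not_two_mul_succ_dvd_pow_add_one (hP : Odd P) (hu : Odd u) :
    ¬ 2 * (P + 1) ∣ P ^ u + 1 := by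
  intro h
  have h' : P + 1 ≡ 0 [MOD 2 * (P + 1)] :=
    ((pow_modEq_self_of_odd_s12 hP hu).add_right 1).symm.trans (modEq_zero_iff_dvd.mpr h)
  have := le_of_dvd (by omega) (modEq_zero_iff_dvd.mp h')
  omega

lemma four_mul_succ_dvd_pow_four_sub_one (hP : Odd P) : 4 * (P + 1) ∣ P ^ 4 - 1 := by
  obtain ⟨x, rfl⟩ := hP
  refine ⟨x * (2 * x ^ 2 + 2 * x + 1), Nat.sub_eq_of_eq_add ?_⟩
  ring

lemma gcd_pow_add_one_pow_sub_one_dvd {p : ℕ} (hp : 0 < p) (k m : ℕ) :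
    gcd (p ^ k + 1) (p ^ m - 1) ∣ 2 * (p ^ gcd k m + 1) := by
  set g := gcd (p ^ k + 1) (p ^ m - 1)
  set P := p ^ gcd k m
  have hg_sq : g ∣ (P - 1) * (P + 1) := by
    have h2k : g ∣ p ^ (2 * k) - 1 := by
      rw [mul_comm, pow_mul, sq, mul_self_tsub_one]
      exact (gcd_dvd_left _ _).mul_right _
    have hgcd : gcd (2 * k) m ∣ 2 * gcd k m :=
      (gcd_mul_left 2 k m) ▸ gcd_dvd_gcd_of_dvd_right _ (dvd_mul_left m 2)
    have := (dvd_gcd h2k (gcd_dvd_right _ _)).trans <| (pow_sub_one_gcd_pow_sub_one p _ _).symm ▸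
      pow_sub_one_dvd_pow_sub_one p hgcd
    rwa [pow_mul', sq, mul_self_tsub_one, mul_comm] at this
  have hg_pred : gcd g (P - 1) ∣ 2 := by
    have hk : P - 1 ∣ p ^ k - 1 := pow_sub_one_dvd_pow_sub_one p (gcd_dvd_left k m)
    have : gcd g (P - 1) ∣ p ^ k + 1 - (p ^ k - 1) :=
      dvd_sub ((gcd_dvd_left _ _).trans (gcd_dvd_left _ _)) ((gcd_dvd_right _ _).trans hk)
    rwa [show p ^ k + 1 - (p ^ k - 1) = 2 by have := one_le_pow k p hp; omega] at this
  exact (dvd_gcd_mul_iff_dvd_mul.mpr hg_sq).trans (mul_dvd_mul_right hg_pred _)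

lemma eq_of_dvd_of_dvd_four_mul {q g : ℕ} (hqg : q ∣ g) (hg : g ∣ 4 * q) (h2 : ¬ 2 * q ∣ g) :
    g = q := by
  obtain ⟨w, rfl⟩ := hqg
  have hq : 0 < q := pos_of_ne_zero <| by rintro rfl; simp at h2
  have hw : w ∣ 4 := (Nat.mul_dvd_mul_iff_left hq).mp (by rwa [mul_comm 4] at hg)
  have hw2 : ¬ 2 ∣ w := fun ⟨c, hc⟩ => h2 ⟨c, by rw [hc]; ring⟩
  have hw0 : 0 < w := pos_of_dvd_of_pos hw four_pos
  have hw4 : w ≤ 4 := le_of_dvd four_pos hw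
  interval_cases w <;> simp_all

lemma gcd_half_add_eq {N b q : ℕ} (hN : 4 * q ∣ N) (hb : q ∣ b) (hb2 : ¬ 2 * q ∣ b)
    (h : gcd b N ∣ 2 * q) : gcd (N / 2 + b) N = q := by
  obtain ⟨a, rfl⟩ : 2 ∣ N := (dvd_mul_right 2 (2 * q)).trans (by rwa [← mul_assoc])
  have ha : 2 * q ∣ a := Nat.dvd_of_mul_dvd_mul_left two_pos (by rwa [← mul_assoc])
  rw [Nat.mul_div_cancel_left a two_pos]
  set g := gcd (a + b) (2 * a)
  have hqg : q ∣ g :=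
    dvd_gcd (dvd_add ((dvd_mul_left q 2).trans ha) hb) (((dvd_mul_left q 2).trans ha).mul_left 2)
  have hg2b : g ∣ 2 * b := by
    have := dvd_sub ((gcd_dvd_left (a + b) (2 * a)).mul_left 2) (gcd_dvd_right (a + b) (2 * a))
    rwa [mul_add, Nat.add_sub_cancel_left] at this
  have hg4q : g ∣ 4 * q := by
    have := dvd_gcd hg2b ((gcd_dvd_right (a + b) (2 * a)).mul_left 2)
    rw [gcd_mul_left] at this
    exact this.trans (by simpa [← mul_assoc] using mul_dvd_mul_left 2 h)
  exact eq_of_dvd_of_dvd_four_mul hqg hg4q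
    fun h' => hb2 ((Nat.dvd_add_right ha).mp (h'.trans (gcd_dvd_left _ _)))

end Nat

theorem stmt_12_general (p m k : ℕ) (hp : p.Prime) (hp5 : 5 ≤ p) (hm : 0 < m)
    (h4 : m / Nat.gcd k m % 4 = 0) :
    Nat.gcd ((p ^ m - 1) / 2 + p ^ k + 1) (p ^ m - 1) = p ^ Nat.gcd k m + 1 := by
  set d := Nat.gcd k m
  have h4d : 4 ∣ m / d := Nat.dvd_of_mod_eq_zero h4
  have hu : Odd (k / d) :=
    (((Nat.coprime_div_gcd_div_gcd (Nat.gcd_pos_of_pos_right k hm)).coprime_dvd_right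
      ((dvd_mul_right 2 2).trans h4d)).symm).odd_of_left
  have hP : Odd (p ^ d) := (hp.odd_of_ne_two (by omega)).pow
  have hpk : (p ^ d) ^ (k / d) = p ^ k := by
    rw [← pow_mul, Nat.mul_div_cancel' (Nat.gcd_dvd_left k m)]
  have hN : 4 * (p ^ d + 1) ∣ p ^ m - 1 := by
    refine (Nat.four_mul_succ_dvd_pow_four_sub_one hP).trans ?_
    rw [← pow_mul]
    exact Nat.pow_sub_one_dvd_pow_sub_one p
      (Nat.mul_dvd_of_dvd_div (Nat.gcd_dvd_right k m) h4d)
  have hb : p ^ d + 1 ∣ p ^ k + 1 := by simpa [hpk] using hu.nat_add_dvd_pow_add_pow (p ^ d) 1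
  have hb2 : ¬ 2 * (p ^ d + 1) ∣ p ^ k + 1 := hpk ▸ Nat.not_two_mul_succ_dvd_pow_add_one hP hu
  rw [add_assoc]
  exact Nat.gcd_half_add_eq hN hb hb2 (Nat.gcd_pow_add_one_pow_sub_one_dvd hp.pos k m)

theorem stmt_12 (p m k : ℕ) (hp : p.Prime) (hp5 : 5 ≤ p) (hm : 0 < m) (hk : k < m)
    (h4 : m / Nat.gcd k m % 4 = 0) :
    Nat.gcd ((p ^ m - 1) / 2 + p ^ k + 1) (p ^ m - 1) = p ^ Nat.gcd k m + 1 :=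
  stmt_12_general p m k hp hp5 hm h4
end

section
/- Let p ≥ 5 be prime, m a positive integer, k < m a nonnegative integer with m/gcd(k, m) ≡ 0 (mod 4), u = (p^m + 1)/2, and v = (p^m - 1)/2 + p^k + 1. Then there is no integer i with 0 ≤ i < m such that v ≡ p^i · u (mod p^m - 1). -/
/-!
Doubling the congruence clears the halves: since `p ^ m ≡ 1`, it becomes
`2 * p ^ k + 2 ≡ 2 * p ^ i [MOD p ^ m - 1]`. Both sides are at most about `2 * p ^ (m - 1)`,
so for `p ≥ 4` they are too close to differ by a nonzero multiple of `p ^ m - 1`, forcing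
`p ^ i = p ^ k + 1`, which is impossible modulo `p` once `p ≥ 3`.
-/

namespace Nat

theorem two_mul_half_pred_add_succ_modEq {n : ℕ} (hn : Odd n) (a : ℕ) :
    2 * ((n - 1) / 2 + a + 1) ≡ 2 * a + 2 [MOD n - 1] := by
  obtain ⟨t, rfl⟩ := hn
  have hsum : 2 * ((2 * t + 1 - 1) / 2 + a + 1) = 2 * a + 2 + (2 * t + 1 - 1) * 1 := by omega
  rw [hsum]
  exact Nat.add_mul_mod_self_left _ _ _

theorem two_mul_mul_half_succ_modEq {n : ℕ} (hn : Odd n) (b : ℕ) :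
    2 * (b * ((n + 1) / 2)) ≡ 2 * b [MOD n - 1] := by
  obtain ⟨t, rfl⟩ := hn
  have hhalf : (2 * t + 1 + 1) / 2 = t + 1 := by omega
  have hsum : 2 * (b * (t + 1)) = 2 * b + (2 * t + 1 - 1) * b := by
    rw [Nat.add_sub_cancel]; ring
  rw [hhalf, hsum]
  exact Nat.add_mul_mod_self_left _ _ _

theorem pow_ne_pow_add_one {p : ℕ} (hp : 3 ≤ p) (i k : ℕ) : p ^ i ≠ p ^ k + 1 := by
  intro h
  cases i with
  | zero =>
    have : 0 < p ^ k := by positivity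
    rw [pow_zero] at h
    omega
  | succ i =>
    have hdvd : p ∣ p ^ k + 1 := h ▸ dvd_pow_self p i.succ_ne_zero
    cases k with
    | zero => have := Nat.le_of_dvd two_pos hdvd; omega
    | succ k =>
      have := Nat.le_of_dvd one_pos ((Nat.dvd_add_right (dvd_pow_self p k.succ_ne_zero)).mp hdvd)
      omega

end Nat

theorem abs_two_mul_pow_sub_two_mul_pow_sub_two_lt {p m i k : ℕ} (hp : 4 ≤ p) (hi : i < m)
    (hk : k < m) : |(2 * p ^ i : ℤ) - (2 * p ^ k + 2)| < p ^ m - 1 := by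
  have hp' : (4 : ℤ) ≤ p := by exact_mod_cast hp
  have hpm : (p : ℤ) ^ m = p * p ^ (m - 1) := by rw [← pow_succ']; congr 1; omega
  have hi_le : (p : ℤ) ^ i ≤ p ^ (m - 1) := pow_le_pow_right₀ (by linarith) (by omega)
  have hk_le : (p : ℤ) ^ k ≤ p ^ (m - 1) := pow_le_pow_right₀ (by linarith) (by omega)
  have hi_pos : (1 : ℤ) ≤ p ^ i := one_le_pow₀ (by linarith)
  have hk_pos : (1 : ℤ) ≤ p ^ k := one_le_pow₀ (by linarith)
  rw [hpm, abs_lt]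
  constructor <;> nlinarith

theorem stmt_13_general (p m k : ℕ) (hp : p.Prime) (hp5 : 5 ≤ p) (hk : k < m) :
    ¬ ∃ i : ℕ, i < m ∧
      (p ^ m - 1) / 2 + p ^ k + 1 ≡ p ^ i * ((p ^ m + 1) / 2) [MOD p ^ m - 1] := by
  rintro ⟨i, hi, hmod⟩
  have hodd : Odd (p ^ m) := (hp.odd_of_ne_two (by omega)).pow
  have hdoubled : 2 * p ^ k + 2 ≡ 2 * p ^ i [MOD p ^ m - 1] :=
    ((Nat.two_mul_half_pred_add_succ_modEq hodd _).symm.trans (hmod.mul_left 2)).trans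
      (Nat.two_mul_mul_half_succ_modEq hodd _)
  have heq : 2 * p ^ k + 2 = 2 * p ^ i := by
    refine hdoubled.eq_of_abs_lt ?_
    push_cast [Nat.one_le_pow m p hp.pos]
    exact abs_two_mul_pow_sub_two_mul_pow_sub_two_lt (by omega) hi hk
  exact Nat.pow_ne_pow_add_one (p := p) (by omega) i k (by omega)

theorem stmt_13 (p m k : ℕ) (hp : p.Prime) (hp5 : 5 ≤ p) (hm : 0 < m) (hk : k < m)
    (h4 : m / Nat.gcd k m % 4 = 0) :
    ¬ ∃ i : ℕ, i < m ∧
      (p ^ m - 1) / 2 + p ^ k + 1 ≡ p ^ i * ((p ^ m + 1) / 2) [MOD p ^ m - 1] :=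
  stmt_13_general p m k hp hp5 hk
end

section
/- Let p ≥ 5 be prime, m a positive integer, k < m with m/gcd(k, m) ≡ 0 (mod 4), and v = (p^m - 1)/2 + p^k + 1. Then the p-cyclotomic coset of v modulo p^m - 1 has size exactly m. -/
/-!
Write `p ^ m - 1 = 2c`, so `v = c + (p ^ k + 1)`. Since `p ^ l` is odd, `c * p ^ l ≡ c` modulo `2c`,
and the coset condition `v * p ^ l ≡ v` reduces to `p ^ (k + l) + p ^ l ≡ p ^ k + 1` modulo
`p ^ m - 1`. Reducing the exponent `k + l` modulo `m`, both sides become sums of two powers `p ^ i`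
with `i < m`, hence are smaller than `p ^ m - 1` and must be equal. Comparing base-`p` digits
forces `l = k` and `m ∣ 2k`, i.e. `m = 2k` when `0 < l < m`; but then `m / gcd(k, m) = 2`.
-/

namespace Nat

theorem mul_modEq_self_of_odd (c : ℕ) {a : ℕ} (ha : Odd a) : c * a ≡ c [MOD 2 * c] := by
  obtain ⟨j, rfl⟩ := ha
  calc c * (2 * j + 1) = c + j * (2 * c) := by ring
    _ ≡ c [MOD 2 * c] := Nat.add_mul_modulus_modEq_iff.mpr rfl

theorem half_add_mul_modEq_iff {c a : ℕ} (b : ℕ) (ha : Odd a) :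
    (c + b) * a ≡ c + b [MOD 2 * c] ↔ b * a ≡ b [MOD 2 * c] := by
  rw [add_mul]
  exact (mul_modEq_self_of_odd c ha).add_iff_left

theorem pow_modEq_pow_mod {p : ℕ} (hp : 0 < p) (m n : ℕ) :
    p ^ n ≡ p ^ (n % m) [MOD p ^ m - 1] := by
  have h1 : p ^ m ≡ 1 [MOD p ^ m - 1] := Nat.modEq_sub (Nat.one_le_pow _ _ hp)
  calc p ^ n = (p ^ m) ^ (n / m) * p ^ (n % m) := by rw [← pow_mul, ← pow_add, Nat.div_add_mod]
    _ ≡ 1 ^ (n / m) * p ^ (n % m) [MOD p ^ m - 1] := (h1.pow _).mul_right _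
    _ = p ^ (n % m) := by rw [one_pow, one_mul]

theorem pow_add_pow_lt_pow_sub_one {p m i j : ℕ} (hp : 4 ≤ p) (hi : i < m) (hj : j < m) :
    p ^ i + p ^ j < p ^ m - 1 := by
  obtain ⟨n, rfl⟩ := Nat.exists_eq_add_of_lt hi
  have hpi : p ^ i ≤ p ^ (i + n) := Nat.pow_le_pow_right (by omega) (by omega)
  have hpj : p ^ j ≤ p ^ (i + n) := Nat.pow_le_pow_right (by omega) (by omega)
  have hpos : 0 < p ^ (i + n) := by positivity
  have hsucc : p ^ (i + n + 1) = p ^ (i + n) * p := pow_succ _ _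
  rw [Nat.lt_sub_iff_add_lt]
  nlinarith

theorem pow_add_pow_eq_of_modEq {p m a b c d : ℕ} (hp : 4 ≤ p) (ha : a < m) (hb : b < m)
    (hc : c < m) (hd : d < m) (h : p ^ a + p ^ b ≡ p ^ c + p ^ d [MOD p ^ m - 1]) :
    p ^ a + p ^ b = p ^ c + p ^ d :=
  h.eq_of_lt_of_lt (pow_add_pow_lt_pow_sub_one hp ha hb) (pow_add_pow_lt_pow_sub_one hp hc hd)

theorem eq_zero_and_eq_of_pow_add_pow_eq_pow_add_one {p a l k : ℕ} (hp : 2 < p) (hl : 0 < l)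
    (h : p ^ a + p ^ l = p ^ k + 1) : a = 0 ∧ l = k := by
  have ha : a = 0 := by
    by_contra ha
    have hdvd : p ∣ p ^ k + 1 := h ▸ dvd_add (dvd_pow_self p ha) (dvd_pow_self p hl.ne')
    rcases Nat.eq_zero_or_pos k with rfl | hk
    · exact absurd (Nat.le_of_dvd two_pos hdvd) (by omega)
    · exact absurd (Nat.le_of_dvd one_pos ((Nat.dvd_add_right (dvd_pow_self p hk.ne')).mp hdvd))
        (by omega)
  subst ha
  refine ⟨rfl, Nat.pow_right_injective hp.le ?_⟩
  simp only [pow_zero] at h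
  show p ^ l = p ^ k
  omega

end Nat

theorem stmt_14 (p m k : ℕ) (hp : p.Prime) (hp5 : 5 ≤ p) (hm : 0 < m) (hk : k < m)
    (h4 : m / Nat.gcd k m % 4 = 0) :
    IsLeast {l : ℕ | 0 < l ∧
      ((p ^ m - 1) / 2 + p ^ k + 1) * p ^ l ≡ (p ^ m - 1) / 2 + p ^ k + 1 [MOD p ^ m - 1]} m := by
  have hp_odd : Odd p := hp.odd_of_ne_two (by omega)
  refine ⟨⟨hm, ?_⟩, fun l ⟨hl, hmod⟩ => ?_⟩
  · simpa using (Nat.pow_modEq_pow_mod hp.pos m m).mul_left ((p ^ m - 1) / 2 + p ^ k + 1)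
  by_contra! hlm
  obtain ⟨c, hc⟩ : 2 ∣ p ^ m - 1 := (Nat.Odd.sub_odd hp_odd.pow odd_one).two_dvd
  rw [hc, Nat.mul_div_cancel_left c two_pos, add_assoc, Nat.half_add_mul_modEq_iff _ hp_odd.pow,
    ← hc] at hmod
  have hsum : p ^ ((k + l) % m) + p ^ l = p ^ k + p ^ 0 := by
    refine Nat.pow_add_pow_eq_of_modEq (by omega) (Nat.mod_lt _ hm) hlm hk hm ?_
    calc p ^ ((k + l) % m) + p ^ l ≡ p ^ (k + l) + p ^ l [MOD p ^ m - 1] :=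
          ((Nat.pow_modEq_pow_mod hp.pos m (k + l)).symm).add_right _
      _ = (p ^ k + 1) * p ^ l := by ring
      _ ≡ p ^ k + p ^ 0 [MOD p ^ m - 1] := hmod
  obtain ⟨hkl, rfl⟩ := Nat.eq_zero_and_eq_of_pow_add_pow_eq_pow_add_one (by omega) hl hsum
  have hm2 : l + l = m :=
    Nat.eq_of_dvd_of_lt_two_mul (by omega) (Nat.dvd_of_mod_eq_zero hkl) (by omega)
  rw [← hm2, ← two_mul, Nat.gcd_eq_left (dvd_mul_left l 2), Nat.mul_div_cancel _ hl] at h4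
  omega
end

section
/- Let p be an odd prime, m a positive integer, and k a nonnegative integer. In the field F_{p^m}, for any nonzero b_1, b_2 in the prime subfield F_p with b_1 + b_2 = -1 and any y in F_{p^m} with x = -(b_1 + b_2 y), the identity x^{p^k+1} + b_1 + b_2 y^{p^k+1} = -b_1 b_2 (y - 1)^{p^k+1} holds. -/
section ExpChar

variable {R : Type*} [CommRing R] {p : ℕ} [ExpChar R p] (n : ℕ)

theorem neg_pow_expChar_pow_add_one (z : R) : (-z) ^ (p ^ n + 1) = z ^ (p ^ n + 1) := by
  rw [neg_pow, pow_succ (-1 : R), neg_one_pow_expChar_pow, neg_mul_neg, one_mul, one_mul]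

/-- Since `a` and `b` are fixed by `z ↦ z ^ p ^ n`, which is additive, both sides are
polynomials of bidegree `(1, 1)` in `(y ^ p ^ n, y)`; their coefficients agree once
`a + b = -1`. -/
theorem add_mul_pow_expChar_pow_add_one {a b : R} (ha : a ^ p ^ n = a) (hb : b ^ p ^ n = b)
    (hab : a + b = -1) (y : R) :
    (a + b * y) ^ (p ^ n + 1) + a + b * y ^ (p ^ n + 1) = -(a * b) * (y - 1) ^ (p ^ n + 1) := by
  rw [pow_succ, pow_succ, pow_succ, add_pow_expChar_pow, mul_pow, ha, hb, sub_pow_expChar_pow,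
    one_pow]
  linear_combination (a + b * y ^ p ^ n * y) * hab

end ExpChar

theorem stmt_15_general (p m k : ℕ) [Fact p.Prime]
    (b₁ b₂ : ZMod p) (hsum : b₁ + b₂ = -1)
    (y x : GaloisField p m)
    (hx : x = -(algebraMap (ZMod p) (GaloisField p m) b₁ +
      algebraMap (ZMod p) (GaloisField p m) b₂ * y)) :
    x ^ (p ^ k + 1) + algebraMap (ZMod p) (GaloisField p m) b₁ +
        algebraMap (ZMod p) (GaloisField p m) b₂ * y ^ (p ^ k + 1) =
      -(algebraMap (ZMod p) (GaloisField p m) b₁ *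
        algebraMap (ZMod p) (GaloisField p m) b₂) * (y - 1) ^ (p ^ k + 1) := by
  have frobenius_fixed (b : ZMod p) :
      algebraMap (ZMod p) (GaloisField p m) b ^ p ^ k = algebraMap (ZMod p) _ b := by
    rw [← map_pow, ZMod.pow_card_pow]
  rw [hx, neg_pow_expChar_pow_add_one]
  exact add_mul_pow_expChar_pow_add_one k (frobenius_fixed b₁) (frobenius_fixed b₂)
    (by rw [← map_add, hsum, map_neg, map_one]) y

theorem stmt_15 (p m k : ℕ) [Fact p.Prime] (hodd : Odd p) (hm : 0 < m)
    (b₁ b₂ : ZMod p) (hb₁ : b₁ ≠ 0) (hb₂ : b₂ ≠ 0) (hsum : b₁ + b₂ = -1)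
    (y x : GaloisField p m)
    (hx : x = -(algebraMap (ZMod p) (GaloisField p m) b₁ +
      algebraMap (ZMod p) (GaloisField p m) b₂ * y)) :
    x ^ (p ^ k + 1) + algebraMap (ZMod p) (GaloisField p m) b₁ +
        algebraMap (ZMod p) (GaloisField p m) b₂ * y ^ (p ^ k + 1) =
      -(algebraMap (ZMod p) (GaloisField p m) b₁ *
        algebraMap (ZMod p) (GaloisField p m) b₂) * (y - 1) ^ (p ^ k + 1) :=
  stmt_15_general p m k b₁ b₂ hsum y x hx
end
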